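/- arXiv:1310.1536 — 2 statements merged into one kernel-verified Lean document; each statement's English description precedes it below -/
import Mathlib

section
/- Let X be uniformly distributed over a set of M distinct codewords {x(1),…,x(M)} ⊆ 𝒳, let Y be a random variable on a finite set 𝒴 jointly distributed with X, and let {B_1,…,B_M} be a partition of 𝒴 into decoding sets. Let ε = (1/M)·Σ_{i=1}^M Pr{Y ∉ B_i | X = x(i)} be the average error probability. Then for every γ > 0, Pr{ P_{X|Y}(X|Y) ≤ e^{-γ} } ≤ ε + e^{-γ}. -/
open Finset

/-- Verdú–Han converse bound (Lemma 2): for X uniform over M distinct codewords,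
Pr{ P_{X|Y}(X|Y) ≤ e^{-γ} } ≤ ε + e^{-γ}, where ε is the average error
probability of the decoding partition {B_i}. -/
theorem stmt2 {X Y : Type*} [Fintype X] [Fintype Y] [DecidableEq Y]
    (M : ℕ) (hM : 0 < M)
    (c : Fin M → X) (hc : Function.Injective c)
    (p : X × Y → ℝ) (hp : ∀ z, 0 ≤ p z) (hsum : ∑ z, p z = 1)
    (hunif : ∀ i, ∑ y, p (c i, y) = 1 / (M : ℝ))
    (hsupp : ∀ x y, (∀ i, c i ≠ x) → p (x, y) = 0)
    (B : Fin M → Finset Y)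
    (hdisj : ∀ i j, i ≠ j → Disjoint (B i) (B j))
    (hcover : Finset.univ.biUnion B = Finset.univ)
    (γ : ℝ) (hγ : 0 < γ) :
    let pY : Y → ℝ := fun y => ∑ x, p (x, y)
    let post : X → Y → ℝ := fun x y => if pY y = 0 then 0 else p (x, y) / pY y
    let ε : ℝ := (1 / (M : ℝ)) *
      ∑ i, (∑ y ∈ (B i)ᶜ, p (c i, y)) / (∑ y, p (c i, y))
    ∑ z ∈ Finset.univ.filter (fun z : X × Y => post z.1 z.2 ≤ Real.exp (-γ)), p z
      ≤ ε + Real.exp (-γ) := by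
  intro pY post ε
  classical
  have hM0 : (M : ℝ) ≠ 0 := Nat.cast_ne_zero.mpr hM.ne'
  have hpY : ∀ y, 0 ≤ pY y := fun y => Finset.sum_nonneg fun x _ => hp _
  have hple : ∀ x y, p (x, y) ≤ pY y := by
    intro x y
    exact Finset.single_le_sum (fun x _ => hp (x, y)) (Finset.mem_univ x)
  -- ε equals the sum of error probabilities
  have hεeq : ε = ∑ i, ∑ y ∈ (B i)ᶜ, p (c i, y) := by
    simp only [ε, hunif, Finset.mul_sum]
    refine Finset.sum_congr rfl fun i _ => ?_
    field_simp
  -- rewrite main sum as sum over codewords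
  have g0 : ∀ x, x ∉ Finset.univ.image c →
      (∑ y, if post x y ≤ Real.exp (-γ) then p (x, y) else 0) = 0 := by
    intro x hx
    have hx' : ∀ i, c i ≠ x := by
      intro i hi
      exact hx (Finset.mem_image.mpr ⟨i, Finset.mem_univ i, hi⟩)
    refine Finset.sum_eq_zero fun y _ => ?_
    simp [hsupp x y hx']
  have key : ∑ z ∈ Finset.univ.filter
        (fun z : X × Y => post z.1 z.2 ≤ Real.exp (-γ)), p z
      = ∑ i, ∑ y, if post (c i) y ≤ Real.exp (-γ) then p (c i, y) else 0 := by
    rw [Finset.sum_filter, Fintype.sum_prod_type]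
    rw [← Finset.sum_subset (Finset.subset_univ (Finset.univ.image c)) (fun x _ hx => g0 x hx)]
    rw [Finset.sum_image (fun i _ j _ h => hc h)]
  -- per-codeword bound
  have hbound : ∀ i, (∑ y, if post (c i) y ≤ Real.exp (-γ) then p (c i, y) else 0)
      ≤ (∑ y ∈ (B i)ᶜ, p (c i, y)) + ∑ y ∈ B i, Real.exp (-γ) * pY y := by
    intro i
    rw [← Finset.sum_add_sum_compl (B i)
      (fun y => if post (c i) y ≤ Real.exp (-γ) then p (c i, y) else 0), add_comm]
    refine add_le_add ?_ ?_
    · refine Finset.sum_le_sum fun y _ => ?_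
      split_ifs with h
      · exact le_refl _
      · exact hp _
    · refine Finset.sum_le_sum fun y _ => ?_
      split_ifs with h
      · by_cases h0 : pY y = 0
        · have : p (c i, y) = 0 := le_antisymm (h0 ▸ hple (c i) y) (hp _)
          rw [this]
          exact mul_nonneg (Real.exp_nonneg _) (hpY y)
        · have hpYpos : 0 < pY y := lt_of_le_of_ne (hpY y) (Ne.symm h0)
          have : post (c i) y = p (c i, y) / pY y := by simp [post, h0]
          rw [this] at h
          calc p (c i, y) = (p (c i, y) / pY y) * pY y := by field_simp
            _ ≤ Real.exp (-γ) * pY y := by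
                exact mul_le_mul_of_nonneg_right h (hpY y)
      · exact mul_nonneg (Real.exp_nonneg _) (hpY y)
  -- sum of the second parts
  have hsum2 : ∑ i, ∑ y ∈ B i, Real.exp (-γ) * pY y = Real.exp (-γ) := by
    rw [← Finset.sum_biUnion (fun i _ j _ h => hdisj i j h), hcover]
    rw [← Finset.mul_sum]
    have : ∑ y, pY y = 1 := by
      rw [← hsum, Fintype.sum_prod_type]
      exact Finset.sum_comm
    rw [this, mul_one]
  calc ∑ z ∈ Finset.univ.filter
        (fun z : X × Y => post z.1 z.2 ≤ Real.exp (-γ)), p z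
      = ∑ i, ∑ y, if post (c i) y ≤ Real.exp (-γ) then p (c i, y) else 0 := key
    _ ≤ ∑ i, ((∑ y ∈ (B i)ᶜ, p (c i, y)) + ∑ y ∈ B i, Real.exp (-γ) * pY y) :=
        Finset.sum_le_sum fun i _ => hbound i
    _ = (∑ i, ∑ y ∈ (B i)ᶜ, p (c i, y)) + ∑ i, ∑ y ∈ B i, Real.exp (-γ) * pY y :=
        Finset.sum_add_distrib
    _ = ε + Real.exp (-γ) := by rw [hεeq, hsum2]
end

section
/- Let X be uniformly distributed over M distinct codewords and Y jointly distributed with X on finite sets, with average decoding error probability ε for a partition {B_i} of 𝒴. Then for every γ > 0, Pr{ (1/n)·log( P_{Y|X}(Y|X) / P_Y(Y) ) ≤ (1/n)·log M − γ } ≤ ε + e^{-nγ}, where n ≥ 1 is arbitrary. -/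
open Finset

/-- Lemma 2 in information-density form: for X uniform over M distinct codewords,
Pr{ (1/n)·log(P_{Y|X}(Y|X)/P_Y(Y)) ≤ (1/n)·log M − γ } ≤ ε + e^{-nγ}. -/
theorem stmt3 {X Y : Type*} [Fintype X] [Fintype Y] [DecidableEq Y]
    (M : ℕ) (hM : 0 < M) (n : ℕ) (hn : 1 ≤ n)
    (c : Fin M → X) (hc : Function.Injective c)
    (p : X × Y → ℝ) (hp : ∀ z, 0 ≤ p z) (hsum : ∑ z, p z = 1)
    (hunif : ∀ i, ∑ y, p (c i, y) = 1 / (M : ℝ))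
    (hsupp : ∀ x y, (∀ i, c i ≠ x) → p (x, y) = 0)
    (B : Fin M → Finset Y)
    (hdisj : ∀ i j, i ≠ j → Disjoint (B i) (B j))
    (hcover : Finset.univ.biUnion B = Finset.univ)
    (γ : ℝ) (hγ : 0 < γ) :
    let pX : X → ℝ := fun x => ∑ y, p (x, y)
    let pY : Y → ℝ := fun y => ∑ x, p (x, y)
    let condYX : X → Y → ℝ := fun x y => if pX x = 0 then 0 else p (x, y) / pX x
    let ε : ℝ := (1 / (M : ℝ)) *
      ∑ i, (∑ y ∈ (B i)ᶜ, p (c i, y)) / (∑ y, p (c i, y))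
    ∑ z ∈ Finset.univ.filter (fun z : X × Y =>
        (1 / (n : ℝ)) * Real.log (condYX z.1 z.2 / pY z.2)
          ≤ (1 / (n : ℝ)) * Real.log M - γ), p z
      ≤ ε + Real.exp (-(n : ℝ) * γ) := by
  intro pX pY condYX ε
  classical
  have hM' : (0:ℝ) < M := by exact_mod_cast hM
  have hn' : (0:ℝ) < n := by exact_mod_cast hn
  have hpY : ∀ y, 0 ≤ pY y := fun y => Finset.sum_nonneg fun x _ => hp _
  have hple : ∀ x y, p (x, y) ≤ pY y := fun x y =>
    Finset.single_le_sum (f := fun x => p (x, y)) (fun x _ => hp _) (Finset.mem_univ x)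
  have hsumXY : ∑ x, ∑ y, p (x, y) = 1 := by
    rw [← hsum, ← Fintype.sum_prod_type]
  have hsumY : ∑ y, pY y = 1 := by
    unfold pY; rw [Finset.sum_comm]; exact hsumXY
  -- key pointwise bound
  have key : ∀ i y, (1 / (n : ℝ)) * Real.log (condYX (c i) y / pY y)
        ≤ (1 / (n : ℝ)) * Real.log M - γ →
      p (c i, y) ≤ Real.exp (-(n:ℝ) * γ) * pY y := by
    intro i y h
    rcases eq_or_lt_of_le (hp (c i, y)) with hz | hz
    · rw [← hz]; exact mul_nonneg (Real.exp_pos _).le (hpY _)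
    · have hpYpos : 0 < pY y := lt_of_lt_of_le hz (hple _ _)
      have hpXc : pX (c i) = 1 / M := hunif i
      have hcond : condYX (c i) y = (M : ℝ) * p (c i, y) := by
        simp only [condYX, hpXc]
        rw [if_neg (one_div_ne_zero (ne_of_gt hM'))]
        field_simp
      have hlog : Real.log (condYX (c i) y / pY y)
          = Real.log M + Real.log (p (c i, y) / pY y) := by
        rw [hcond, mul_div_assoc, Real.log_mul (ne_of_gt hM') (by positivity)]
      rw [hlog, mul_add] at h
      have h2 : (1/(n:ℝ)) * Real.log (p (c i, y) / pY y) ≤ -γ := by linarith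
      rw [one_div, inv_mul_le_iff₀ hn'] at h2
      have h4 : p (c i, y) / pY y ≤ Real.exp (-(n:ℝ) * γ) := by
        rw [← Real.log_le_iff_le_exp (by positivity)]
        calc Real.log (p (c i, y) / pY y) ≤ (n:ℝ) * -γ := h2
          _ = -(n:ℝ) * γ := by ring
      rwa [div_le_iff₀ hpYpos] at h4
  -- the "correct decoding" region G
  set G : Finset (X × Y) := Finset.univ.biUnion (fun i => {c i} ×ˢ B i) with hG
  have hGsum : ∀ f : X × Y → ℝ, ∑ z ∈ G, f z = ∑ i, ∑ y ∈ B i, f (c i, y) := by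
    intro f
    rw [hG, Finset.sum_biUnion]
    · exact Finset.sum_congr rfl fun i _ => by
        rw [Finset.sum_product, Finset.sum_singleton]
    · intro i _ j _ hij
      simp only [Function.onFun, Finset.disjoint_left, Finset.mem_product,
        Finset.mem_singleton]
      rintro ⟨a, b⟩ ⟨rfl, _⟩ ⟨hac, _⟩
      exact hij (hc hac)
  have hdisj' : Set.PairwiseDisjoint ↑(Finset.univ : Finset (Fin M)) B :=
    fun i _ j _ hij => hdisj i j hij
  have hGpY : ∑ z ∈ G, pY z.2 = 1 := by
    rw [hGsum (fun z => pY z.2), ← Finset.sum_biUnion hdisj', hcover, hsumY]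
  have hε : ε = ∑ i, ∑ y ∈ (B i)ᶜ, p (c i, y) := by
    unfold ε
    simp only [hunif, one_div, div_eq_mul_inv, inv_inv]
    rw [← Finset.sum_mul]
    field_simp
  have hcompl : ∑ z ∈ Gᶜ, p z = ε := by
    have h1 : ∑ z ∈ G, p z + ∑ z ∈ Gᶜ, p z = 1 := by
      rw [Finset.sum_add_sum_compl, hsum]
    have h2 : ∑ z ∈ G, p z + ε = 1 := by
      rw [hGsum p, hε, ← Finset.sum_add_distrib]
      have : ∀ i ∈ (Finset.univ : Finset (Fin M)),
          (∑ y ∈ B i, p (c i, y)) + ∑ y ∈ (B i)ᶜ, p (c i, y) = 1 / (M:ℝ) := by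
        intro i _
        rw [Finset.sum_add_sum_compl, hunif]
      rw [Finset.sum_congr rfl this, Finset.sum_const, Finset.card_univ,
        Fintype.card_fin, nsmul_eq_mul]
      field_simp
    linarith
  -- main estimate
  set E := Finset.univ.filter (fun z : X × Y =>
      (1 / (n : ℝ)) * Real.log (condYX z.1 z.2 / pY z.2)
        ≤ (1 / (n : ℝ)) * Real.log M - γ) with hE
  have hsplit : ∑ z ∈ E ∩ G, p z + ∑ z ∈ E \ G, p z = ∑ z ∈ E, p z :=
    Finset.sum_inter_add_sum_sdiff E G p
  have hA : ∑ z ∈ E ∩ G, p z ≤ Real.exp (-(n:ℝ) * γ) := by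
    have step1 : ∑ z ∈ E ∩ G, p z ≤ ∑ z ∈ E ∩ G, Real.exp (-(n:ℝ) * γ) * pY z.2 := by
      refine Finset.sum_le_sum fun z hz => ?_
      have hzE := Finset.mem_inter.1 hz |>.1
      have hzG := Finset.mem_inter.1 hz |>.2
      rw [hG, Finset.mem_biUnion] at hzG
      obtain ⟨i, _, hzi⟩ := hzG
      rw [Finset.mem_product, Finset.mem_singleton] at hzi
      obtain ⟨hz1, hz2⟩ := hzi
      rw [hE, Finset.mem_filter] at hzE
      have hcondz := hzE.2
      rw [hz1] at hcondz
      have := key i z.2 hcondz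
      rwa [← hz1] at this
    have step2 : ∑ z ∈ E ∩ G, Real.exp (-(n:ℝ) * γ) * pY z.2
        ≤ ∑ z ∈ G, Real.exp (-(n:ℝ) * γ) * pY z.2 := by
      refine Finset.sum_le_sum_of_subset_of_nonneg (Finset.inter_subset_right) ?_
      intro z _ _
      exact mul_nonneg (Real.exp_pos _).le (hpY _)
    calc ∑ z ∈ E ∩ G, p z ≤ ∑ z ∈ G, Real.exp (-(n:ℝ) * γ) * pY z.2 :=
          le_trans step1 step2
      _ = Real.exp (-(n:ℝ) * γ) * ∑ z ∈ G, pY z.2 := by rw [Finset.mul_sum]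
      _ = Real.exp (-(n:ℝ) * γ) := by rw [hGpY, mul_one]
  have hB : ∑ z ∈ E \ G, p z ≤ ε := by
    rw [← hcompl]
    refine Finset.sum_le_sum_of_subset_of_nonneg ?_ (fun z _ _ => hp z)
    intro z hz
    exact Finset.mem_compl.2 (Finset.mem_sdiff.1 hz).2
  linarith
end
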